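/- arXiv:1810.11629 — 2 statements merged into one kernel-verified Lean document; each statement's English description precedes it below -/
import Mathlib

section
/- Let λ₁ > 0, M > 0, 0 < p ≤ 1 with p·λ₁·M > 1, and let Q < 0 satisfy p·λ₁·e^{M Q} = Q + p·λ₁. Define g(x) = (1 − e^{Q x})/M for 0 ≤ x < M and g(x) = −Q e^{Q x}/(M(Q + p·λ₁)) for x ≥ M, set F_X(t) = 1 − e^{−λ₁ t} and G(x) = ∫₀ˣ g(u)du. Then for every x ≥ M, G(x) = (1 − p)∫₀ˣ F_X(x − u) g(u) du + p·[ ∫_M^{M+x} F_X(x − u + M) g(u) du + ∫₀^M F_X(x − u) g(u) du ]. -/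
open Real MeasureTheory

/-- The stationary density of the buffer energy under the incremental on-off policy:
`g(x) = (1 - exp(Q x))/M` for `x < M` and `g(x) = -Q exp(Q x)/(M (Q + p λ₁))` for `x ≥ M`. -/
noncomputable def onOffDensity (lam M p Q : ℝ) (x : ℝ) : ℝ :=
  if x < M then (1 - Real.exp (Q * x)) / M
  else (-Q * Real.exp (Q * x)) / (M * (Q + p * lam))

/-!
Writing `F_X(x - u) = 1 - exp (-λ x) exp (λ u)`, every integral of the equation is expressed
through `G y = ∫₀^y g` and `P y = ∫₀^y exp (λ u) g u` at `y ∈ {M, x, M + x}`. For `y ≥ M` both are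
explicit: the balance equation `p λ exp (M Q) = Q + p λ` collapses the contribution of `[0, M]`
(and makes `g` continuous at `M`), giving `G y = 1 - exp (Q y) / (M (Q + p λ))` and
`P y = Q (exp (λ M) - 1) / (M λ (Q + λ)) - Q exp ((Q + λ) y) / (M (Q + p λ) (Q + λ))`.
The equation is then an identity between exponentials in `x`.
-/

open Set

theorem integral_exp_const_mul {k : ℝ} (hk : k ≠ 0) (a b : ℝ) :
    ∫ u in a..b, exp (k * u) = (exp (k * b) - exp (k * a)) / k := by
  rw [intervalIntegral.integral_comp_mul_left (fun u => exp u) hk, integral_exp, smul_eq_mul,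
    inv_mul_eq_div]

theorem integral_one_sub_exp_mul {f : ℝ → ℝ} {a b : ℝ} (hf : IntervalIntegrable f volume a b)
    (lam y : ℝ) :
    ∫ u in a..b, (1 - exp (-lam * (y - u))) * f u
      = (∫ u in a..b, f u) - exp (-lam * y) * ∫ u in a..b, exp (lam * u) * f u := by
  have hexp : IntervalIntegrable (fun u => exp (lam * u) * f u) volume a b :=
    hf.continuousOn_mul (by fun_prop)
  rw [← intervalIntegral.integral_const_mul, ← intervalIntegral.integral_sub hf (hexp.const_mul _)]
  refine intervalIntegral.integral_congr fun u _ => ?_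
  rw [show -lam * (y - u) = -lam * y + lam * u by ring, exp_add]
  ring

section

variable {lam M p Q : ℝ}

theorem exp_mul_eq_of_balance (hpl : p * lam ≠ 0)
    (hQeq : p * lam * exp (M * Q) = Q + p * lam) :
    exp (Q * M) = (Q + p * lam) / (p * lam) := by
  rw [eq_div_iff hpl, mul_comm, mul_comm Q, hQeq]

theorem add_mul_ne_zero_of_balance (hpl : p * lam ≠ 0)
    (hQeq : p * lam * exp (M * Q) = Q + p * lam) : Q + p * lam ≠ 0 :=
  hQeq ▸ mul_ne_zero hpl (exp_ne_zero _)

theorem onOffDensity_branches_eq (hQeq : p * lam * exp (M * Q) = Q + p * lam) :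
    (1 - exp (Q * M)) / M = -Q * exp (Q * M) / (M * (Q + p * lam)) := by
  rcases eq_or_ne (Q + p * lam) 0 with hD | hD
  · have hpl : p * lam = 0 := by simpa [hD, exp_ne_zero] using hQeq
    have hQ : Q = 0 := by linarith
    simp [hQ]
  · rw [mul_comm M, ← div_div]
    rw [mul_comm M Q] at hQeq
    congr 1
    field_simp
    linear_combination -hQeq

theorem onOffDensity_of_le (hQeq : p * lam * exp (M * Q) = Q + p * lam) {u : ℝ} (hu : u ≤ M) :
    onOffDensity lam M p Q u = (1 - exp (Q * u)) / M := by
  rcases hu.lt_or_eq with hu | rfl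
  · simp [onOffDensity, hu]
  · simp [onOffDensity, onOffDensity_branches_eq hQeq]

theorem onOffDensity_of_ge {u : ℝ} (hu : M ≤ u) :
    onOffDensity lam M p Q u = -Q * exp (Q * u) / (M * (Q + p * lam)) := by
  simp [onOffDensity, not_lt.2 hu]

theorem continuous_onOffDensity (hQeq : p * lam * exp (M * Q) = Q + p * lam) :
    Continuous (onOffDensity lam M p Q) := by
  refine Continuous.if (fun u hu => ?_) (by fun_prop) (by fun_prop)
  rw [show {x : ℝ | x < M} = Iio M from rfl, frontier_Iio, mem_singleton_iff] at hu
  rw [hu, onOffDensity_branches_eq hQeq]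

theorem integral_onOffDensity_of_le (hM : 0 < M) (hQ : Q ≠ 0) (hpl : p * lam ≠ 0)
    (hQeq : p * lam * exp (M * Q) = Q + p * lam) {y : ℝ} (hy : M ≤ y) :
    ∫ u in 0..y, onOffDensity lam M p Q u = 1 - exp (Q * y) / (M * (Q + p * lam)) := by
  have hg := (continuous_onOffDensity hQeq).intervalIntegrable (μ := volume)
  have hlow : ∫ u in 0..M, onOffDensity lam M p Q u = ∫ u in 0..M, (1 - exp (Q * u)) / M :=
    intervalIntegral.integral_congr fun u hu =>
      onOffDensity_of_le hQeq (by rw [uIcc_of_le hM.le] at hu; exact hu.2)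
  have hhigh : ∫ u in M..y, onOffDensity lam M p Q u
      = ∫ u in M..y, -Q / (M * (Q + p * lam)) * exp (Q * u) :=
    intervalIntegral.integral_congr fun u hu => by
      rw [onOffDensity_of_ge (by rw [uIcc_of_le hy] at hu; exact hu.1)]; ring
  rw [← intervalIntegral.integral_add_adjacent_intervals (hg 0 M) (hg M y), hlow, hhigh,
    intervalIntegral.integral_div, intervalIntegral.integral_sub
      (continuous_const.intervalIntegrable 0 M) ((continuous_const_mul Q).rexp.intervalIntegrable 0 M),
    intervalIntegral.integral_const, intervalIntegral.integral_const_mul,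
    integral_exp_const_mul hQ, integral_exp_const_mul hQ, exp_mul_eq_of_balance hpl hQeq]
  simp only [mul_zero, exp_zero]
  have hD := add_mul_ne_zero_of_balance hpl hQeq
  have hp : p ≠ 0 := left_ne_zero_of_mul hpl
  have hlam : lam ≠ 0 := right_ne_zero_of_mul hpl
  field_simp
  ring

theorem integral_exp_mul_onOffDensity_of_le (hM : 0 < M) (hlam : lam ≠ 0) (hQl : Q + lam ≠ 0)
    (hpl : p * lam ≠ 0) (hQeq : p * lam * exp (M * Q) = Q + p * lam) {y : ℝ} (hy : M ≤ y) :
    ∫ u in 0..y, exp (lam * u) * onOffDensity lam M p Q u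
      = Q * (exp (lam * M) - 1) / (M * lam * (Q + lam))
        - Q * exp ((Q + lam) * y) / (M * (Q + p * lam) * (Q + lam)) := by
  have hg : ∀ a b, IntervalIntegrable (fun u => exp (lam * u) * onOffDensity lam M p Q u)
      volume a b :=
    ((continuous_const_mul lam).rexp.mul (continuous_onOffDensity hQeq)).intervalIntegrable
  have hlow : ∫ u in 0..M, exp (lam * u) * onOffDensity lam M p Q u
      = ∫ u in 0..M, (exp (lam * u) - exp ((Q + lam) * u)) / M :=
    intervalIntegral.integral_congr fun u hu => by
      rw [onOffDensity_of_le hQeq (by rw [uIcc_of_le hM.le] at hu; exact hu.2), add_mul, exp_add]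
      ring
  have hhigh : ∫ u in M..y, exp (lam * u) * onOffDensity lam M p Q u
      = ∫ u in M..y, -Q / (M * (Q + p * lam)) * exp ((Q + lam) * u) :=
    intervalIntegral.integral_congr fun u hu => by
      rw [onOffDensity_of_ge (by rw [uIcc_of_le hy] at hu; exact hu.1), add_mul, exp_add]
      ring
  rw [← intervalIntegral.integral_add_adjacent_intervals (hg 0 M) (hg M y), hlow, hhigh,
    intervalIntegral.integral_div, intervalIntegral.integral_sub
      ((continuous_const_mul lam).rexp.intervalIntegrable 0 M)
      ((continuous_const_mul (Q + lam)).rexp.intervalIntegrable 0 M),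
    intervalIntegral.integral_const_mul, integral_exp_const_mul hlam, integral_exp_const_mul hQl,
    integral_exp_const_mul hQl, add_mul Q lam M, exp_add, exp_mul_eq_of_balance hpl hQeq]
  simp only [mul_zero, exp_zero]
  have hD := add_mul_ne_zero_of_balance hpl hQeq
  have hp : p ≠ 0 := left_ne_zero_of_mul hpl
  -- `field_simp` only cancels the sum `Q + p * lam` once it is an atom
  set D := Q + p * lam with hDdef
  field_simp
  rw [hDdef]
  ring

end

theorem stmt4_general (lam M p Q : ℝ) (hlam : 0 < lam) (hM : 0 < M)
    (hp0 : 0 < p) (hp1 : p ≤ 1)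
    (hQneg : Q < 0) (hQeq : p * lam * Real.exp (M * Q) = Q + p * lam) :
    ∀ x : ℝ, M ≤ x →
      (∫ u in (0:ℝ)..x, onOffDensity lam M p Q u) =
        (1 - p) * (∫ u in (0:ℝ)..x,
            (1 - Real.exp (-lam * (x - u))) * onOffDensity lam M p Q u)
        + p * ((∫ u in M..(M + x),
              (1 - Real.exp (-lam * (x - u + M))) * onOffDensity lam M p Q u)
            + ∫ u in (0:ℝ)..M,
              (1 - Real.exp (-lam * (x - u))) * onOffDensity lam M p Q u) := by
  intro x hx
  have hpl : p * lam ≠ 0 := by positivity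
  have hD : 0 < Q + p * lam := hQeq ▸ by positivity
  have hQl : Q + lam ≠ 0 := by nlinarith [mul_nonneg hlam.le (sub_nonneg.2 hp1)]
  have hg := (continuous_onOffDensity hQeq).intervalIntegrable (μ := volume)
  have hexpg a b := (hg a b).continuousOn_mul (g := fun u => exp (lam * u)) (by fun_prop)
  have hMx : M ≤ M + x := by linarith
  simp_rw [show ∀ u, x - u + M = x + M - u from fun u => by ring]
  rw [integral_one_sub_exp_mul (hg 0 x), integral_one_sub_exp_mul (hg M (M + x)),
    integral_one_sub_exp_mul (hg 0 M),
    ← intervalIntegral.integral_interval_sub_left (hg 0 (M + x)) (hg 0 M),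
    ← intervalIntegral.integral_interval_sub_left (hexpg 0 (M + x)) (hexpg 0 M)]
  simp only [integral_onOffDensity_of_le hM hQneg.ne hpl hQeq, hx, hMx, le_refl,
    integral_exp_mul_onOffDensity_of_le hM hlam.ne' hQl hpl hQeq]
  have hE := exp_mul_eq_of_balance hpl hQeq
  -- an atom for `Q + p * lam`, so that `mul_add` leaves the denominators `M * (Q + p * lam)` intact
  set D := Q + p * lam with hDdef
  simp only [add_mul, mul_add, neg_mul, exp_add, exp_neg, hE]
  field_simp
  rw [hDdef]
  ring

/-- Verification of Theorem 4 (case `x ≥ M`): the candidate stationary density `g`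
satisfies the steady-state integral equation for the CDF `G(x) = ∫₀ˣ g`. -/
theorem stmt4 (lam M p Q : ℝ) (hlam : 0 < lam) (hM : 0 < M)
    (hp0 : 0 < p) (hp1 : p ≤ 1) (hphi : 1 < p * lam * M)
    (hQneg : Q < 0) (hQeq : p * lam * Real.exp (M * Q) = Q + p * lam) :
    ∀ x : ℝ, M ≤ x →
      (∫ u in (0:ℝ)..x, onOffDensity lam M p Q u) =
        (1 - p) * (∫ u in (0:ℝ)..x,
            (1 - Real.exp (-lam * (x - u))) * onOffDensity lam M p Q u)
        + p * ((∫ u in M..(M + x),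
              (1 - Real.exp (-lam * (x - u + M))) * onOffDensity lam M p Q u)
            + ∫ u in (0:ℝ)..M,
              (1 - Real.exp (-lam * (x - u))) * onOffDensity lam M p Q u) :=
  stmt4_general lam M p Q hlam hM hp0 hp1 hQneg hQeq
end

section
/- Let 0 < Γ ≤ Γ′ and let W₁, W₂, W₄ > 0 with W₁ ≠ W₂. Let γ_SR, γ_SD, γ_RD be independent exponential random variables with rates W₄, W₂, W₁ respectively. Then P({γ_SD < Γ′} ∩ {min(γ_SR, γ_RD + γ_SD) < Γ}) = (1 − e^{−W₄ Γ})(1 − e^{−W₂ Γ′}) + e^{−W₄ Γ}·[ (1 − e^{−W₂ Γ}) + W₂(e^{−W₁ Γ} − e^{−W₂ Γ})/(W₁ − W₂) ]. -/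
open Real MeasureTheory ProbabilityTheory

open Set

/-!
Since `γRD ≥ 0` almost surely and `Γ ≤ Γ'`, the event `γRD + γSD < Γ` already forces
`γSD < Γ'`, so the outage event splits, according to whether `γSR < Γ`, into the disjoint events
`{γSR < Γ, γSD < Γ'}` and `{γRD + γSD < Γ, γSR ≥ Γ}`. Independence factors both probabilities.
The law of `γRD + γSD` is the convolution of two exponential laws, and its CDF at `Γ` is the
integral over `[0, Γ]` of the density of one against the CDF of the other.
-/

lemma one_sub_exp_neg_mul_nonneg {b y : ℝ} (hb : 0 ≤ b) (hy : 0 ≤ y) :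
    0 ≤ 1 - exp (-(b * y)) := by
  have : exp (-(b * y)) ≤ 1 := exp_le_one_iff.mpr (by nlinarith)
  linarith

lemma integral_mul_exp_mul_one_sub_exp {a b t : ℝ} (hab : a ≠ b) :
    ∫ x in (0 : ℝ)..t, a * exp (-(a * x)) * (1 - exp (-(b * (t - x))))
      = (1 - exp (-b * t)) + b * (exp (-a * t) - exp (-b * t)) / (a - b) := by
  have hab' : a - b ≠ 0 := sub_ne_zero.2 hab
  have hF : ∀ x ∈ uIcc 0 t, HasDerivAt
      (fun x => -exp (-(a * x)) + a / (a - b) * exp (-(a * x) - b * (t - x)))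
      (a * exp (-(a * x)) * (1 - exp (-(b * (t - x))))) x := by
    intro x _
    have hx := hasDerivAt_id x
    refine (((hx.const_mul a).neg.exp.neg).add
      (((hx.const_mul a).neg.sub ((hx.const_sub t).const_mul b)).exp.const_mul (a / (a - b))))
      |>.congr_deriv ?_
    simp only [Pi.neg_apply, Pi.sub_apply, id, mul_one]
    rw [sub_eq_add_neg (-(a * x)), exp_add]
    field_simp
    ring
  rw [intervalIntegral.integral_eq_sub_of_hasDerivAt hF
    (Continuous.intervalIntegrable (by fun_prop) _ _)]
  simp only [mul_zero, neg_zero, exp_zero, sub_zero, zero_sub, neg_mul, sub_self]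
  field_simp
  ring

lemma ProbabilityTheory.IndepFun.measureReal_inter_preimage_eq_mul {Ω β γ : Type*}
    {mΩ : MeasurableSpace Ω} {mβ : MeasurableSpace β} {mγ : MeasurableSpace γ} {μ : Measure Ω}
    {X : Ω → β} {Y : Ω → γ}
    (h : IndepFun X Y μ) {s : Set β} {t : Set γ} (hs : MeasurableSet s) (ht : MeasurableSet t) :
    μ.real (X ⁻¹' s ∩ Y ⁻¹' t) = μ.real (X ⁻¹' s) * μ.real (Y ⁻¹' t) := by
  simp only [measureReal_def, h.measure_inter_preimage_eq_mul s t hs ht, ENNReal.toReal_mul]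

lemma MeasureTheory.Measure.conv_Iio_eq_lintegral (μ ν : Measure ℝ) [SFinite ν] (t : ℝ) :
    (μ ∗ ν) (Iio t) = ∫⁻ x, ν (Iio (t - x)) ∂μ := by
  rw [Measure.conv, Measure.map_apply measurable_add measurableSet_Iio,
    Measure.prod_apply (measurable_add measurableSet_Iio)]
  congr with x
  congr with y
  simp [lt_sub_iff_add_lt']

namespace ProbabilityTheory

lemma ae_expMeasure_nonneg (r : ℝ) : ∀ᵐ x ∂expMeasure r, 0 ≤ x := by
  refine (ae_withDensity_iff (measurable_exponentialPDFReal r).ennreal_ofReal).2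
    (ae_of_all _ fun x hx => ?_)
  by_contra! hneg
  exact hx (exponentialPDF_of_neg hneg)

lemma expMeasure_Iio {r : ℝ} (hr : 0 < r) (x : ℝ) :
    expMeasure r (Iio x) = ENNReal.ofReal (if 0 ≤ x then 1 - exp (-(r * x)) else 0) := by
  rw [expMeasure, gammaMeasure, withDensity_apply _ measurableSet_Iio,
    setLIntegral_congr Iio_ae_eq_Iic]
  exact lintegral_exponentialPDF_eq_antiDeriv hr x

lemma expMeasure_real_Iio {r x : ℝ} (hr : 0 < r) (hx : 0 ≤ x) :
    (expMeasure r).real (Iio x) = 1 - exp (-(r * x)) := by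
  rw [measureReal_def, expMeasure_Iio hr, if_pos hx,
    ENNReal.toReal_ofReal (one_sub_exp_neg_mul_nonneg hr.le hx)]

lemma expMeasure_real_Ici {r x : ℝ} (hr : 0 < r) (hx : 0 ≤ x) :
    (expMeasure r).real (Ici x) = exp (-(r * x)) := by
  have := isProbabilityMeasure_expMeasure hr
  rw [← compl_Iio, measureReal_compl measurableSet_Iio, probReal_univ, expMeasure_real_Iio hr hx]
  ring

lemma expMeasure_conv_Iio {a b t : ℝ} (ha : 0 < a) (hb : 0 < b) (ht : 0 ≤ t) :
    (expMeasure a ∗ expMeasure b) (Iio t)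
      = ENNReal.ofReal (∫ x in (0 : ℝ)..t, a * exp (-(a * x)) * (1 - exp (-(b * (t - x))))) := by
  have := isProbabilityMeasure_expMeasure hb
  set φ : ℝ → ℝ := fun x => a * exp (-(a * x)) * (1 - exp (-(b * (t - x))))
  have hφ_nonneg : ∀ x ∈ Icc 0 t, 0 ≤ φ x := fun x hx =>
    mul_nonneg (by positivity) (one_sub_exp_neg_mul_nonneg hb.le (sub_nonneg.2 hx.2))
  have hφ : ∀ x, exponentialPDF a x * expMeasure b (Iio (t - x))
      = ENNReal.ofReal ((Icc 0 t).indicator φ x) := by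
    intro x
    rw [expMeasure_Iio hb, exponentialPDF, ← ENNReal.ofReal_mul (exponentialPDFReal_nonneg ha x)]
    congr 1
    by_cases hx : 0 ≤ x <;> by_cases hxt : x ≤ t <;>
      simp [φ, exponentialPDFReal, gammaPDFReal, hx, hxt]
  have hint : Integrable ((Icc 0 t).indicator φ) :=
    (Continuous.integrableOn_Icc (by fun_prop)).integrable_indicator measurableSet_Icc
  rw [Measure.conv_Iio_eq_lintegral,
    show expMeasure a = volume.withDensity (exponentialPDF a) from rfl,
    lintegral_withDensity_eq_lintegral_mul _
      (show Measurable (exponentialPDF a) from (measurable_exponentialPDFReal a).ennreal_ofReal)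
      (Antitone.measurable fun x y hxy => measure_mono (Iio_subset_Iio (by linarith)))]
  simp only [Pi.mul_apply, hφ]
  rw [← ofReal_integral_eq_lintegral_ofReal hint
      (ae_of_all _ fun x => indicator_nonneg hφ_nonneg x),
    integral_indicator measurableSet_Icc, integral_Icc_eq_integral_Ioc,
    intervalIntegral.integral_of_le ht]

lemma expMeasure_conv_real_Iio {a b t : ℝ} (ha : 0 < a) (hb : 0 < b) (hab : a ≠ b) (ht : 0 ≤ t) :
    (expMeasure a ∗ expMeasure b).real (Iio t)
      = (1 - exp (-b * t)) + b * (exp (-a * t) - exp (-b * t)) / (a - b) := by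
  rw [measureReal_def, expMeasure_conv_Iio ha hb ht, ENNReal.toReal_ofReal
    (intervalIntegral.integral_nonneg ht fun x hx => ?_), integral_mul_exp_mul_one_sub_exp hab]
  exact mul_nonneg (by positivity) (one_sub_exp_neg_mul_nonneg hb.le (sub_nonneg.2 hx.2))

end ProbabilityTheory

lemma lt_and_min_add_lt_iff {Γ Γ' x y z : ℝ} (hΓ : Γ ≤ Γ') (hz : 0 ≤ z) :
    (y < Γ' ∧ min x (z + y) < Γ) ↔ (x < Γ ∧ y < Γ') ∨ (z + y < Γ ∧ Γ ≤ x) := by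
  grind

/-- Outage probability of the HSU architecture in the unstable-buffer case
(Eq. (22)): `γ_SR`, `γ_SD`, `γ_RD` independent exponentials with rates
`W₄`, `W₂`, `W₁`. -/
theorem stmt14 {Ω : Type*} [MeasurableSpace Ω] (P : Measure Ω) [IsProbabilityMeasure P]
    (Γ Γ' W1 W2 W4 : ℝ)
    (hΓ : 0 < Γ) (hΓΓ' : Γ ≤ Γ')
    (hW1 : 0 < W1) (hW2 : 0 < W2) (hW4 : 0 < W4) (hne : W1 ≠ W2)
    (γSR γSD γRD : Ω → ℝ)
    (hmSR : Measurable γSR) (hmSD : Measurable γSD) (hmRD : Measurable γRD)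
    (hindep : iIndepFun (m := fun _ => (inferInstance : MeasurableSpace ℝ))
      ![γSR, γSD, γRD] P)
    (hdSR : Measure.map γSR P = expMeasure W4)
    (hdSD : Measure.map γSD P = expMeasure W2)
    (hdRD : Measure.map γRD P = expMeasure W1) :
    (P ({ω | γSD ω < Γ'} ∩ {ω | min (γSR ω) (γRD ω + γSD ω) < Γ})).toReal
      = (1 - Real.exp (-W4 * Γ)) * (1 - Real.exp (-W2 * Γ'))
        + Real.exp (-W4 * Γ) *
          ((1 - Real.exp (-W2 * Γ))
            + W2 * (Real.exp (-W1 * Γ) - Real.exp (-W2 * Γ)) / (W1 - W2)) := by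
  have hmeas : ∀ i, Measurable (![γSR, γSD, γRD] i) := fun i => by fin_cases i <;> assumption
  have hSR_SD : IndepFun γSR γSD P := by simpa using hindep.indepFun (i := 0) (j := 1) (by decide)
  have hRD_SD : IndepFun γRD γSD P := by simpa using hindep.indepFun (i := 2) (j := 1) (by decide)
  have hsum_SR : IndepFun (γRD + γSD) γSR P := by
    simpa using hindep.indepFun_add_left hmeas 2 1 0 (by decide) (by decide)
  have hsum_law : P.map (γRD + γSD) = expMeasure W1 ∗ expMeasure W2 := by
    rw [hRD_SD.map_add_eq_map_conv_map hmRD hmSD, hdRD, hdSD]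
  have hRD_nonneg : ∀ᵐ ω ∂P, 0 ≤ γRD ω :=
    ae_of_ae_map hmRD.aemeasurable (hdRD ▸ ae_expMeasure_nonneg W1)
  have hevent : ({ω | γSD ω < Γ'} ∩ {ω | min (γSR ω) (γRD ω + γSD ω) < Γ} : Set Ω)
      =ᵐ[P] (γSR ⁻¹' Iio Γ ∩ γSD ⁻¹' Iio Γ' ∪ (γRD + γSD) ⁻¹' Iio Γ ∩ γSR ⁻¹' Ici Γ :
        Set Ω) := by
    filter_upwards [hRD_nonneg] with ω hω
    exact propext (lt_and_min_add_lt_iff hΓΓ' hω)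
  have hdisj : Disjoint (γSR ⁻¹' Iio Γ ∩ γSD ⁻¹' Iio Γ')
      ((γRD + γSD) ⁻¹' Iio Γ ∩ γSR ⁻¹' Ici Γ) := by
    rw [disjoint_left]
    rintro ω ⟨hlt, -⟩ ⟨-, hge⟩
    exact (show Γ ≤ γSR ω from hge).not_gt hlt
  rw [← measureReal_def, measureReal_congr hevent,
    measureReal_union hdisj (((hmRD.add hmSD) measurableSet_Iio).inter (hmSR measurableSet_Ici)),
    hSR_SD.measureReal_inter_preimage_eq_mul measurableSet_Iio measurableSet_Iio,
    hsum_SR.measureReal_inter_preimage_eq_mul measurableSet_Iio measurableSet_Ici,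
    ← map_measureReal_apply hmSR measurableSet_Iio, ← map_measureReal_apply hmSD measurableSet_Iio,
    ← map_measureReal_apply (hmRD.add hmSD) measurableSet_Iio,
    ← map_measureReal_apply hmSR measurableSet_Ici, hdSR, hdSD, hsum_law,
    expMeasure_real_Iio hW4 hΓ.le, expMeasure_real_Iio hW2 (hΓ.le.trans hΓΓ'),
    expMeasure_conv_real_Iio hW1 hW2 hne hΓ.le, expMeasure_real_Ici hW4 hΓ.le]
  simp only [neg_mul]
  ring
end
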